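/- Let G be the generating operator of the complex group algebra of the free group on N generators (N ≥ 1) and let τ be the canonical trace (the coefficient at the identity e). Define c : ℕ → ℕ → ℂ by c 0 0 = 1, c 0 j = 0 for j ≥ 1, c (n+1) 0 = 2N · c n 1, and c (n+1) j = c n (j−1) + (2N − 1) · c n (j+1) for j ≥ 1. Then for every n ≥ 1, τ(G^n) = 0 if n is odd, and τ(G^n) = c n 0 if n is even. -/

import Mathlib

/-- `Xop N n` is the sum, in the complex group algebra of the free group on `N`
generators, of all group elements of reduced word length `n`. -/
noncomputable def Xop (N n : ℕ) : MonoidAlgebra ℂ (FreeGroup (Fin N)) :=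
  ∑ᶠ w ∈ {w : FreeGroup (Fin N) | FreeGroup.norm w = n},
    MonoidAlgebra.of ℂ (FreeGroup (Fin N)) w

/-- The generating operator `G = g₁ + ... + g_N + g₁⁻¹ + ... + g_N⁻¹`. -/
noncomputable def genOp (N : ℕ) : MonoidAlgebra ℂ (FreeGroup (Fin N)) :=
  ∑ i : Fin N, (MonoidAlgebra.of ℂ (FreeGroup (Fin N)) (FreeGroup.of i)
    + MonoidAlgebra.of ℂ (FreeGroup (Fin N)) ((FreeGroup.of i)⁻¹))

/-- The canonical trace `τ`, the coefficient at the identity. -/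
noncomputable def tr (N : ℕ) (f : MonoidAlgebra ℂ (FreeGroup (Fin N))) : ℂ := f.coeff 1

/-!
The coefficient of `G ^ n` at `w` counts the walks of length `n` from `1` to `w` in the
Cayley graph of the free group, a `2N`-regular tree. Since `(G * f) w` is the sum of `f` over the
`2N` neighbours of `w`, and all neighbours of `1` have length `1` while a nontrivial `w` has one
neighbour of length `|w| - 1` and `2N - 1` of length `|w| + 1`, induction on `n` shows that this
coefficient is `c n |w|`. The trace is then `c n 0`, and `c n j` vanishes whenever `n + j` is odd.
-/

namespace FreeGroup

variable {α : Type*} [DecidableEq α]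

theorem norm_mk_singleton (x : α × Bool) : norm (mk [x]) = 1 := by
  rw [norm, toWord_mk, reduce_singleton, List.length_singleton]

theorem norm_mk_singleton_mul {w : FreeGroup α} {hd : α × Bool} {tl : List (α × Bool)}
    (hw : w.toWord = hd :: tl) (x : α × Bool) :
    norm (mk [x] * w) = if x = (hd.1, !hd.2) then tl.length else tl.length + 2 := by
  rw [← mk_toWord (x := w), mul_mk, List.singleton_append, norm, toWord_mk, reduce.cons,
    reduce_toWord, hw]
  by_cases hx : x = (hd.1, !hd.2)
  · simp [hx]
  · have : ¬(x.1 = hd.1 ∧ x.2 = !hd.2) := fun h => hx (Prod.ext h.1 h.2)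
    simp [this, hx]

theorem sum_letter_norm_mul [Fintype α] {R : Type*} [CommRing R] (φ : ℕ → R)
    (w : FreeGroup α) :
    ∑ p : α × Bool, φ (norm (mk [p] * w)) =
      if w = 1 then 2 * Fintype.card α * φ 1
      else φ (norm w - 1) + (2 * Fintype.card α - 1) * φ (norm w + 1) := by
  rcases hw : w.toWord with _ | ⟨hd, tl⟩
  · rw [toWord_eq_nil_iff.mp hw]
    simp only [mul_one, norm_mk_singleton, Finset.sum_const, Finset.card_univ, Fintype.card_prod,
      Fintype.card_bool, nsmul_eq_mul, Nat.cast_mul, Nat.cast_ofNat, if_true]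
    ring
  · have hw1 : w ≠ 1 := fun h => by simp [h] at hw
    have hnorm : norm w = tl.length + 1 := by rw [norm, hw, List.length_cons]
    have hsplit (p : α × Bool) : φ (norm (mk [p] * w)) =
        (if p = (hd.1, !hd.2) then φ tl.length - φ (tl.length + 2) else 0)
          + φ (tl.length + 2) := by
      rw [norm_mk_singleton_mul hw]
      split_ifs <;> ring
    simp only [hsplit, Finset.sum_add_distrib, Finset.sum_ite_eq', Finset.mem_univ, if_true,
      Finset.sum_const, Finset.card_univ, Fintype.card_prod, Fintype.card_bool, nsmul_eq_mul,
      hw1, if_false, hnorm, Nat.add_sub_cancel]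
    push_cast
    ring

end FreeGroup

open FreeGroup

theorem coeff_genOp_mul {N : ℕ} (f : MonoidAlgebra ℂ (FreeGroup (Fin N)))
    (w : FreeGroup (Fin N)) :
    (genOp N * f).coeff w = ∑ p : Fin N × Bool, f.coeff (mk [p] * w) := by
  have of_eq (i : Fin N) : FreeGroup.of i = mk [(i, true)] := rfl
  have inv_of_eq (i : Fin N) : (FreeGroup.of i)⁻¹ = mk [(i, false)] := by
    rw [of_eq, inv_mk]; rfl
  rw [genOp, Finset.sum_mul, MonoidAlgebra.coeff_sum, Finsupp.finsetSum_apply,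
    Fintype.sum_prod_type]
  refine Finset.sum_congr rfl fun i _ => ?_
  rw [add_mul, MonoidAlgebra.coeff_add, Finsupp.add_apply, MonoidAlgebra.of_apply,
    MonoidAlgebra.of_apply, MonoidAlgebra.coeff_single_mul_apply,
    MonoidAlgebra.coeff_single_mul_apply, one_mul, one_mul, inv_inv, Fintype.sum_bool, inv_of_eq,
    of_eq, add_comm]

theorem coeff_genOp_pow {N : ℕ} {c : ℕ → ℕ → ℂ}
    (h00 : c 0 0 = 1)
    (h0j : ∀ j, 1 ≤ j → c 0 j = 0)
    (hrec0 : ∀ n, c (n + 1) 0 = 2 * (N : ℂ) * c n 1)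
    (hrec : ∀ n j, 1 ≤ j → c (n + 1) j = c n (j - 1) + (2 * (N : ℂ) - 1) * c n (j + 1))
    (n : ℕ) (w : FreeGroup (Fin N)) : (genOp N ^ n).coeff w = c n (norm w) := by
  induction n generalizing w with
  | zero =>
    rw [pow_zero, MonoidAlgebra.one_def, MonoidAlgebra.coeff_single, Finsupp.single_apply]
    by_cases hw : w = 1
    · simp [hw, h00]
    · rw [if_neg (Ne.symm hw), h0j _ (Nat.pos_of_ne_zero (mt norm_eq_zero.mp hw))]
  | succ n ih =>
    simp only [pow_succ', coeff_genOp_mul, ih, sum_letter_norm_mul, Fintype.card_fin]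
    split_ifs with hw
    · rw [hw, FreeGroup.norm_one, hrec0]
    · rw [hrec n _ (Nat.pos_of_ne_zero (mt norm_eq_zero.mp hw))]

theorem eq_zero_of_odd_add {N : ℕ} {c : ℕ → ℕ → ℂ}
    (h0j : ∀ j, 1 ≤ j → c 0 j = 0)
    (hrec0 : ∀ n, c (n + 1) 0 = 2 * (N : ℂ) * c n 1)
    (hrec : ∀ n j, 1 ≤ j → c (n + 1) j = c n (j - 1) + (2 * (N : ℂ) - 1) * c n (j + 1))
    {n j : ℕ} (h : Odd (n + j)) : c n j = 0 := by
  induction n generalizing j with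
  | zero => exact h0j j (by rcases h with ⟨k, hk⟩; omega)
  | succ n ih =>
    rcases j with _ | j
    · rw [hrec0, ih (by simpa [add_comm] using h), mul_zero]
    · rw [hrec n (j + 1) j.succ_pos, Nat.add_sub_cancel, ih (by grind), ih (by grind),
        mul_zero, add_zero]

theorem trace_genOp_pow_general (N : ℕ) (c : ℕ → ℕ → ℂ)
    (h00 : c 0 0 = 1)
    (h0j : ∀ j, 1 ≤ j → c 0 j = 0)
    (hrec0 : ∀ n, c (n + 1) 0 = 2 * (N : ℂ) * c n 1)
    (hrec : ∀ n j, 1 ≤ j → c (n + 1) j = c n (j - 1) + (2 * (N : ℂ) - 1) * c n (j + 1)) :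
    ∀ n : ℕ, 1 ≤ n →
      (Odd n → tr N (genOp N ^ n) = 0) ∧ (Even n → tr N (genOp N ^ n) = c n 0) := by
  intro n _
  have htr : tr N (genOp N ^ n) = c n 0 := by
    rw [tr, coeff_genOp_pow h00 h0j hrec0 hrec, FreeGroup.norm_one]
  exact ⟨fun hodd => htr.trans (eq_zero_of_odd_add h0j hrec0 hrec hodd), fun _ => htr⟩

theorem trace_genOp_pow (N : ℕ) (hN : 1 ≤ N) (c : ℕ → ℕ → ℂ)
    (h00 : c 0 0 = 1)
    (h0j : ∀ j, 1 ≤ j → c 0 j = 0)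
    (hrec0 : ∀ n, c (n + 1) 0 = 2 * (N : ℂ) * c n 1)
    (hrec : ∀ n j, 1 ≤ j → c (n + 1) j = c n (j - 1) + (2 * (N : ℂ) - 1) * c n (j + 1)) :
    ∀ n : ℕ, 1 ≤ n →
      (Odd n → tr N (genOp N ^ n) = 0) ∧ (Even n → tr N (genOp N ^ n) = c n 0) :=
  trace_genOp_pow_general N c h00 h0j hrec0 hrec
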